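/- arXiv:1512.05526 — 2 statements merged into one kernel-verified Lean document; each statement's English description precedes it below -/
import Mathlib

section
/- For 0 < ρ < 1 with 3 − ρ^{-2} > 0 (i.e., ρ² > 1/3), the function mse(α) = (2·snr²/(2-α))·(1 − α/(α − 1 + ρ^{-2})) on (0,2) attains its unique minimum at α_opt = (3 − ρ^{-2})/2. -/
/-!
Writing `c = ρ⁻²`, the MSE simplifies to `2 snr² (c - 1) / ((2 - α)(α - 1 + c))`. Since `c > 1` the
numerator is positive, and the denominator is the concave quadratic
`((1 + c)/2)² - (α - (3 - c)/2)²`, positive between its roots `1 - c` and `2` and strictly maximal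
at their midpoint `(3 - c)/2`.
-/

open Set

noncomputable def mse (snr c α : ℝ) : ℝ :=
  2 * snr ^ 2 / (2 - α) * (1 - α / (α - 1 + c))

lemma mse_eq_div {snr c α : ℝ} (h2 : 2 - α ≠ 0) (hc : α - 1 + c ≠ 0) :
    mse snr c α = 2 * snr ^ 2 * (c - 1) / ((2 - α) * (α - 1 + c)) := by
  unfold mse
  field_simp
  ring

lemma sub_mul_eq_sq_sub_sq_midpoint (c α : ℝ) :
    (2 - α) * (α - 1 + c) = ((1 + c) / 2) ^ 2 - (α - (3 - c) / 2) ^ 2 := by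
  ring

lemma mse_lt_mse_of_ne {snr c α : ℝ} (hsnr : snr ≠ 0) (hc : 1 < c) (hα : α ∈ Ioo (1 - c) 2)
    (hne : α ≠ (3 - c) / 2) : mse snr c ((3 - c) / 2) < mse snr c α := by
  obtain ⟨hα0, hα2⟩ := hα
  have hden : 0 < (2 - α) * (α - 1 + c) := mul_pos (by linarith) (by linarith)
  have hden_lt : (2 - α) * (α - 1 + c) < (2 - (3 - c) / 2) * ((3 - c) / 2 - 1 + c) := by
    rw [sub_mul_eq_sq_sub_sq_midpoint, sub_mul_eq_sq_sub_sq_midpoint, sub_self]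
    have : 0 < (α - (3 - c) / 2) ^ 2 := sq_pos_of_ne_zero (sub_ne_zero.mpr hne)
    linarith
  rw [mse_eq_div (by linarith) (by linarith), mse_eq_div (by linarith) (by linarith)]
  exact div_lt_div_of_pos_left (by positivity) hden hden_lt

/-- For `ρ ∈ (1/√3, 1)` (equivalently `ρ² > 1/3`, so that `α_opt = (3 - ρ⁻²)/2 > 0`), the
closed-form MSE attains its unique minimum on `(0,2)` at `α_opt = (3 - ρ⁻²)/2`. -/
theorem stmt8 (snr ρ : ℝ) (hsnr : 0 < snr) (hρ0 : 0 < ρ) (hρ1 : ρ < 1)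
    (hρ3 : 0 < 3 - (ρ ^ 2)⁻¹) :
    (3 - (ρ ^ 2)⁻¹) / 2 ∈ Set.Ioo (0 : ℝ) 2 ∧
    ∀ α ∈ Set.Ioo (0 : ℝ) 2, α ≠ (3 - (ρ ^ 2)⁻¹) / 2 →
      (2 * snr ^ 2 / (2 - (3 - (ρ ^ 2)⁻¹) / 2)) *
          (1 - ((3 - (ρ ^ 2)⁻¹) / 2) / ((3 - (ρ ^ 2)⁻¹) / 2 - 1 + (ρ ^ 2)⁻¹)) <
        (2 * snr ^ 2 / (2 - α)) * (1 - α / (α - 1 + (ρ ^ 2)⁻¹)) := by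
  have hc : 1 < (ρ ^ 2)⁻¹ := (one_lt_inv₀ (by positivity)).mpr (by nlinarith)
  refine ⟨⟨by linarith, by linarith⟩, fun α hα hne => ?_⟩
  exact mse_lt_mse_of_ne hsnr.ne' hc ⟨by linarith [hα.1], hα.2⟩ hne
end

section
/- For r̄ ∈ (1/3, 1), the function mse(α) = (2·snr²/(2-α))·(1 − α/(α − 1 + r̄^{-1})) on (0,2) attains its minimum at α = (3 − r̄^{-1})/2. -/
lemma aux15 (s c α : ℝ) (hs : 0 ≤ s) (hc1 : 1 < c) (hc3 : c < 3)
    (hα0 : 0 < α) (hα2 : α < 2) :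
    (s / (2 - (3 - c) / 2)) * (1 - ((3 - c) / 2) / ((3 - c) / 2 - 1 + c)) ≤
      (s / (2 - α)) * (1 - α / (α - 1 + c)) := by
  have hd1 : 0 < 2 - α := by linarith
  have hd2 : 0 < α - 1 + c := by linarith
  have hd3 : 0 < 2 - (3 - c) / 2 := by linarith
  have hd4 : 0 < (3 - c) / 2 - 1 + c := by linarith
  have e1 : 1 - ((3 - c) / 2) / ((3 - c) / 2 - 1 + c) = (c - 1) / ((3 - c) / 2 - 1 + c) := by
    rw [one_sub_div hd4.ne']; ring_nf
  have e2 : 1 - α / (α - 1 + c) = (c - 1) / (α - 1 + c) := by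
    rw [one_sub_div hd2.ne']; ring_nf
  rw [e1, e2, div_mul_div_comm, div_mul_div_comm]
  have hnum : 0 ≤ s * (c - 1) := by nlinarith
  have hkey : (2 - α) * (α - 1 + c) ≤ (2 - (3 - c) / 2) * ((3 - c) / 2 - 1 + c) := by
    nlinarith [sq_nonneg (α - (3 - c) / 2)]
  gcongr

/-- For `r̄ ∈ (1/3, 1)`, the function `mse(α) = (2 snr²/(2-α))(1 - α/(α - 1 + r̄⁻¹))` on
`(0,2)` attains its minimum at `α = (3 - r̄⁻¹)/2`. -/
theorem stmt15 (snr r : ℝ) (hsnr : 0 < snr) (hr0 : 1 / 3 < r) (hr1 : r < 1) :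
    (3 - r⁻¹) / 2 ∈ Set.Ioo (0 : ℝ) 2 ∧
    ∀ α ∈ Set.Ioo (0 : ℝ) 2,
      (2 * snr ^ 2 / (2 - (3 - r⁻¹) / 2)) *
          (1 - ((3 - r⁻¹) / 2) / ((3 - r⁻¹) / 2 - 1 + r⁻¹)) ≤
        (2 * snr ^ 2 / (2 - α)) * (1 - α / (α - 1 + r⁻¹)) := by
  have hrpos : (0 : ℝ) < r := lt_trans (by norm_num) hr0
  have hir : r⁻¹ * r = 1 := inv_mul_cancel₀ hrpos.ne'
  have hc1 : 1 < r⁻¹ := by nlinarith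
  have hc3 : r⁻¹ < 3 := by nlinarith
  refine ⟨⟨by linarith, by linarith⟩, fun α hα => ?_⟩
  exact aux15 (2 * snr ^ 2) r⁻¹ α (by positivity) hc1 hc3 hα.1 hα.2
end
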